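/- Let R be a Banach space and let R^(γ) denote its γ-th transfinite dual. Then for every odd ordinal γ, the space R^(γ) is finitely representable in R* = R^(1). -/

import Mathlib

/-- `X` is finitely representable in `Y`: for every `ε > 0` and every finite-dimensional
subspace `F ⊆ X` there is a linear map `T : F → Y` with
`(1 − ε)‖x‖ ≤ ‖T x‖ ≤ (1 + ε)‖x‖` for all `x ∈ F`. -/
def FinitelyRepresentable (X Y : Type*) [NormedAddCommGroup X] [NormedSpace ℝ X]
    [NormedAddCommGroup Y] [NormedSpace ℝ Y] : Prop :=
  ∀ ε : ℝ, 0 < ε → ∀ F : Subspace ℝ X, FiniteDimensional ℝ F →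
    ∃ T : F →ₗ[ℝ] Y, ∀ x : F, (1 - ε) * ‖x‖ ≤ ‖T x‖ ∧ ‖T x‖ ≤ (1 + ε) * ‖x‖

/-- A Banach space `X` is superreflexive if every Banach space finitely representable
in `X` is reflexive (i.e. the canonical embedding into the bidual is surjective). -/
def IsSuperreflexive (X : Type u) [NormedAddCommGroup X] [NormedSpace ℝ X] : Prop :=
  ∀ (Y : Type u) [NormedAddCommGroup Y] [NormedSpace ℝ Y] [CompleteSpace Y],
    FinitelyRepresentable Y X → Function.Surjective (NormedSpace.inclusionInDoubleDual ℝ Y)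

universe u

/-- An ordinal is *even* if it is `0`, a limit ordinal, or of the form `β + 2n`
with `β` zero or a limit ordinal and `n ∈ ℕ`. -/
def IsEvenOrdinal (α : Ordinal.{0}) : Prop :=
  ∃ (β : Ordinal.{0}) (n : ℕ), (β = 0 ∨ Order.IsSuccLimit β) ∧ α = β + 2 * n

/-- An ordinal is *odd* if it is the successor of an even ordinal. -/
def IsOddOrdinal (γ : Ordinal.{0}) : Prop :=
  ∃ α : Ordinal.{0}, IsEvenOrdinal α ∧ γ = α + 1

/-- The family `space : Ordinal → Type u` realizes the transfinite duals of `R`: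
`space 0` is (isometric to) `R`, `space (α+1)` is (isometric to) the dual of `space α`,
and for an even `γ` the spaces `space β` for even `β < γ` sit inside `space γ` via a
compatible system of isometric embeddings `incl` which on the steps `β ↦ β + 2` is the
canonical embedding of a space into its bidual, and whose ranges have dense union in
`space α` when `α` is a limit ordinal (so `space α` is the completion of the union). -/
def IsTransfiniteDualSystem
    (R : Type u) [NormedAddCommGroup R] [NormedSpace ℝ R] [CompleteSpace R]
    (space : Ordinal.{0} → Type u)
    [∀ α, NormedAddCommGroup (space α)] [∀ α, NormedSpace ℝ (space α)]
    [∀ α, CompleteSpace (space α)]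
    (zeroEquiv : space 0 ≃ₗᵢ[ℝ] R)
    (succEquiv : ∀ α, space (α + 1) ≃ₗᵢ[ℝ] StrongDual ℝ (space α))
    (incl : ∀ β γ, β < γ → IsEvenOrdinal β → IsEvenOrdinal γ → (space β →ₗᵢ[ℝ] space γ)) :
    Prop :=
  (∀ β γ δ (h1 : β < γ) (h2 : γ < δ) (hβ : IsEvenOrdinal β) (hγ : IsEvenOrdinal γ)
      (hδ : IsEvenOrdinal δ) (x : space β),
      incl γ δ h2 hγ hδ (incl β γ h1 hβ hγ x) = incl β δ (h1.trans h2) hβ hδ x) ∧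
  (∀ β (hβ : IsEvenOrdinal β) (h2 : IsEvenOrdinal (β + 1 + 1)) (hlt : β < β + 1 + 1)
      (x : space β),
      incl β (β + 1 + 1) hlt hβ h2 x
        = (succEquiv (β + 1)).symm
            ((NormedSpace.inclusionInDoubleDual ℝ (space β) x).comp
              ((succEquiv β).toContinuousLinearEquiv :
                space (β + 1) →L[ℝ] StrongDual ℝ (space β)))) ∧
  (∀ α (hlim : Order.IsSuccLimit α) (hα : IsEvenOrdinal α),
      Dense (⋃ (β : Ordinal.{0}) (h : β < α) (hβ : IsEvenOrdinal β),
        Set.range (incl β α h hβ hα)))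

/-!
Induction on the odd ordinal `γ`. For `γ = 1` the space is `R*`. For `γ = γ' + 2` the space is
the bidual of `R^(γ')`, and every bidual is finitely representable in the space itself (weak local
reflexivity: a finite-dimensional form of Goldstine's theorem, obtained from Hahn–Banach
separation and the `ℓ¹`–`ℓ∞` duality of finite products). For `γ = β + 1` with `β` a limit,
`R^(γ)` is the dual of a space in which the even `R^(δ)`, `δ < β`, form an increasing family with
dense union; a compactness (net) argument makes restriction to one such `R^(δ)` almost isometric
on any finite-dimensional space of functionals, so these embed almost isometrically into
`R^(δ + 1)`, which is finitely representable in `R*` by induction.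
-/
section AlmostIsometry

variable {V W U : Type*} [NormedAddCommGroup V] [NormedSpace ℝ V]
  [NormedAddCommGroup W] [NormedSpace ℝ W] [NormedAddCommGroup U] [NormedSpace ℝ U]

def IsAlmostIsometry (ε : ℝ) (T : V →ₗ[ℝ] W) : Prop :=
  ∀ x, (1 - ε) * ‖x‖ ≤ ‖T x‖ ∧ ‖T x‖ ≤ (1 + ε) * ‖x‖

namespace IsAlmostIsometry

variable {ε δ : ℝ} {T : V →ₗ[ℝ] W}

lemma mono (hT : IsAlmostIsometry ε T) (hεδ : ε ≤ δ) : IsAlmostIsometry δ T := fun x =>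
  ⟨le_trans (by gcongr) (hT x).1, (hT x).2.trans (by gcongr)⟩

lemma of_linearIsometry (J : V →ₗᵢ[ℝ] W) (hε : 0 ≤ ε) : IsAlmostIsometry ε J.toLinearMap :=
  fun x => by
    simp only [LinearIsometry.coe_toLinearMap, LinearIsometry.norm_map]
    constructor <;> nlinarith [norm_nonneg x]

lemma comp {S : W →ₗ[ℝ] U} (hS : IsAlmostIsometry ε S) (hT : IsAlmostIsometry δ T)
    (hε : 0 ≤ ε) : IsAlmostIsometry (ε + δ + ε * δ) (S ∘ₗ T) := fun x => by
  obtain ⟨hT₁, hT₂⟩ := hT x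
  obtain ⟨hS₁, hS₂⟩ := hS (T x)
  have hx := norm_nonneg x
  simp only [LinearMap.comp_apply]
  constructor
  · rcases le_total ε 1 with h | h
    · nlinarith [mul_le_mul_of_nonneg_left hT₁ (sub_nonneg.2 h)]
    · nlinarith [norm_nonneg (S (T x))]
  · nlinarith [mul_le_mul_of_nonneg_left hT₂ (by linarith : 0 ≤ 1 + ε)]

lemma of_sphere (hT : ∀ x, ‖x‖ = 1 → 1 - ε ≤ ‖T x‖ ∧ ‖T x‖ ≤ 1 + ε) :
    IsAlmostIsometry ε T := by
  intro x
  rcases eq_or_ne x 0 with rfl | hx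
  · simp
  have hx₀ : 0 < ‖x‖ := norm_pos_iff.2 hx
  obtain ⟨h₁, h₂⟩ :=
    hT (‖x‖⁻¹ • x) (by rw [norm_smul, norm_inv, norm_norm, inv_mul_cancel₀ hx₀.ne'])
  rw [map_smul, norm_smul, norm_inv, norm_norm] at h₁ h₂
  constructor
  · rwa [le_inv_mul_iff₀ hx₀, mul_comm] at h₁
  · rwa [inv_mul_le_iff₀ hx₀, mul_comm] at h₂

end IsAlmostIsometry

lemma exists_pos_add_add_mul_le {ε : ℝ} (hε : 0 < ε) : ∃ δ > 0, δ + δ + δ * δ ≤ ε := by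
  refine ⟨min ε 1 / 3, by positivity, ?_⟩
  nlinarith [min_le_left ε 1, min_le_right ε 1, lt_min hε one_pos]

lemma exists_pos_le_half_three_mul_le {ε : ℝ} (hε : 0 < ε) :
    ∃ η : ℝ, 0 < η ∧ η ≤ 1 / 2 ∧ 3 * η ≤ ε :=
  ⟨min ε 1 / 3, by positivity, by linarith [min_le_right ε 1], by linarith [min_le_left ε 1]⟩

end AlmostIsometry

namespace FinitelyRepresentable

variable {X Y Z : Type*} [NormedAddCommGroup X] [NormedSpace ℝ X]
  [NormedAddCommGroup Y] [NormedSpace ℝ Y] [NormedAddCommGroup Z] [NormedSpace ℝ Z]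

lemma of_linearIsometry (J : X →ₗᵢ[ℝ] Y) : FinitelyRepresentable X Y := fun ε hε F _ =>
  ⟨J.toLinearMap ∘ₗ F.subtype, fun x => by
    simpa using IsAlmostIsometry.of_linearIsometry J hε.le (x : X)⟩

lemma of_forall_exists_isAlmostIsometry {ι : Type*} {W : ι → Type*}
    [∀ i, NormedAddCommGroup (W i)] [∀ i, NormedSpace ℝ (W i)]
    (hW : ∀ i, FinitelyRepresentable (W i) Z)
    (hX : ∀ ε > 0, ∀ F : Subspace ℝ X, FiniteDimensional ℝ F →
      ∃ i, ∃ T : F →ₗ[ℝ] W i, IsAlmostIsometry ε T) :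
    FinitelyRepresentable X Z := by
  intro ε hε F hF
  obtain ⟨δ, hδ, hδε⟩ := exists_pos_add_add_mul_le hε
  obtain ⟨i, T, hT⟩ := hX δ hδ F hF
  obtain ⟨S, hS⟩ := hW i δ hδ (LinearMap.range T) inferInstance
  exact ⟨S ∘ₗ T.rangeRestrict, (IsAlmostIsometry.comp hS (fun x => hT x) hδ.le).mono hδε⟩

lemma trans (hXY : FinitelyRepresentable X Y) (hYZ : FinitelyRepresentable Y Z) :
    FinitelyRepresentable X Z :=
  of_forall_exists_isAlmostIsometry (W := fun _ : Unit => Y) (fun _ => hYZ)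
    fun ε hε F hF => ⟨(), hXY ε hε F hF⟩

lemma congr_left (e : X ≃ₗᵢ[ℝ] Y) (h : FinitelyRepresentable Y Z) : FinitelyRepresentable X Z :=
  (of_linearIsometry e.toLinearIsometry).trans h

end FinitelyRepresentable

section Nets

variable {V W : Type*} [NormedAddCommGroup V] [NormedSpace ℝ V]
  [NormedAddCommGroup W] [NormedSpace ℝ W]

lemma exists_finset_sphere_net [FiniteDimensional ℝ V] {η : ℝ} (hη : 0 < η) :
    ∃ t : Finset V, (∀ u ∈ t, ‖u‖ = 1) ∧ ∀ x, ‖x‖ = 1 → ∃ u ∈ t, ‖x - u‖ < η := by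
  obtain ⟨t, hts, htfin, hcover⟩ :=
    Metric.finite_approx_of_totallyBounded (isCompact_sphere (0 : V) 1).totallyBounded η hη
  refine ⟨htfin.toFinset, fun u hu => by simpa using hts (htfin.mem_toFinset.1 hu), ?_⟩
  intro x hx
  obtain ⟨u, hu, hxu⟩ := Set.mem_iUnion₂.1 (hcover (by simpa using hx))
  exact ⟨u, htfin.mem_toFinset.2 hu, by rwa [← dist_eq_norm]⟩

lemma IsAlmostIsometry.of_net {T : V →L[ℝ] W} {t : Set V} {η : ℝ} (hη₀ : 0 ≤ η)
    (hη : η ≤ 1 / 2) (hnet : ∀ x, ‖x‖ = 1 → ∃ u ∈ t, ‖x - u‖ < η)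
    (hT : ∀ u ∈ t, 1 - η ≤ ‖T u‖ ∧ ‖T u‖ ≤ 1) : IsAlmostIsometry (3 * η) (T : V →ₗ[ℝ] W) := by
  have hclose : ∀ x, ‖x‖ = 1 → ∃ u ∈ t, ‖T x - T u‖ ≤ ‖T‖ * η := fun x hx => by
    obtain ⟨u, hu, hxu⟩ := hnet x hx
    refine ⟨u, hu, ?_⟩
    rw [← map_sub]
    exact (T.le_opNorm _).trans (by gcongr)
  have hTnorm : ‖T‖ ≤ 1 + 2 * η := by
    have : ‖T‖ ≤ 1 + ‖T‖ * η := T.opNorm_le_of_unit_norm (by positivity) fun x hx => by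
      obtain ⟨u, hu, hTxu⟩ := hclose x hx
      linarith [norm_le_norm_add_norm_sub' (T x) (T u), (hT u hu).2]
    nlinarith [norm_nonneg T]
  refine IsAlmostIsometry.of_sphere fun x hx => ?_
  obtain ⟨u, hu, hTxu⟩ := hclose x hx
  obtain ⟨hlow, hup⟩ := abs_le.1 ((abs_norm_sub_norm_le (T x) (T u)).trans hTxu)
  have hsmall : ‖T‖ * η ≤ 2 * η := by nlinarith
  simp only [ContinuousLinearMap.coe_coe]
  constructor <;> linarith [hT u hu]

end Nets

section Functionals

variable {E X : Type*} [NormedAddCommGroup E] [NormedSpace ℝ E]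
  [NormedAddCommGroup X] [NormedSpace ℝ X]

lemma ContinuousLinearMap.exists_norm_le_one_lt_apply (f : StrongDual ℝ E) {r : ℝ}
    (hr : r < ‖f‖) : ∃ x, ‖x‖ ≤ 1 ∧ r < f x := by
  obtain ⟨x, hx, hfx⟩ := f.exists_lt_apply_of_lt_opNorm hr
  rcases le_or_gt 0 (f x) with hpos | hneg
  · exact ⟨x, hx.le, by rwa [Real.norm_of_nonneg hpos] at hfx⟩
  · exact ⟨-x, by simpa using hx.le, by rwa [map_neg, ← Real.norm_of_nonpos hneg.le]⟩

lemma ContinuousLinearMap.opNorm_le_of_apply_le (f : StrongDual ℝ E) {C : ℝ}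
    (hf : ∀ x, ‖x‖ ≤ 1 → f x ≤ C) : ‖f‖ ≤ C := by
  have hC : 0 ≤ C := by simpa using hf 0 (by simp)
  refine f.opNorm_le_of_unit_norm hC fun x hx => abs_le.2 ⟨?_, hf x hx.le⟩
  linarith [show -f x ≤ C by simpa using hf (-x) (by simp [hx])]

variable {ι : Type*} [Fintype ι]

lemma sum_norm_comp_single_le [DecidableEq ι] (Φ : StrongDual ℝ (ι → X)) :
    ∑ k, ‖Φ ∘L ContinuousLinearMap.single ℝ (fun _ => X) k‖ ≤ ‖Φ‖ := by
  set g := fun k => Φ ∘L ContinuousLinearMap.single ℝ (fun _ => X) k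
  refine le_of_forall_pos_le_add fun η hη => ?_
  set η' := η / (Fintype.card ι + 1)
  have hη' : 0 < η' := by positivity
  choose x hx hgx using fun k => (g k).exists_norm_le_one_lt_apply (sub_lt_self ‖g k‖ hη')
  have hΦx : Φ x ≤ ‖Φ‖ := (le_abs_self _).trans <|
    (Φ.le_opNorm x).trans (mul_le_of_le_one_right (norm_nonneg _) (pi_norm_le_iff_of_nonneg
      zero_le_one |>.2 hx))
  have hcard : Fintype.card ι * η' ≤ η := by
    rw [mul_div_assoc', div_le_iff₀ (by positivity)]
    nlinarith
  calc ∑ k, ‖g k‖ ≤ ∑ k, (g k (x k) + η') := Finset.sum_le_sum fun k _ => by linarith [hgx k]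
    _ = Φ x + Fintype.card ι * η' := by
      rw [Finset.sum_add_distrib, ContinuousLinearMap.sum_comp_single, Finset.sum_const,
        Finset.card_univ, nsmul_eq_mul]
    _ ≤ ‖Φ‖ + η := by linarith

lemma exists_sum_norm_le_of_subspace_pi (S : Subspace ℝ (ι → X)) (φ : StrongDual ℝ S) :
    ∃ g : ι → StrongDual ℝ X, ∑ k, ‖g k‖ ≤ ‖φ‖ ∧ ∀ z : S, φ z = ∑ k, g k ((z : ι → X) k) := by
  classical
  obtain ⟨Φ, hΦφ, hΦ⟩ := exists_extension_norm_eq S φ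
  refine ⟨fun k => Φ ∘L ContinuousLinearMap.single ℝ (fun _ => X) k,
    hΦ ▸ sum_norm_comp_single_le Φ, fun z => ?_⟩
  rw [← hΦφ, ← ContinuousLinearMap.sum_comp_single]

end Functionals

section LocalReflexivity

variable {X E : Type*} [NormedAddCommGroup X] [NormedSpace ℝ X]
  [AddCommGroup E] [Module ℝ E] [FiniteDimensional ℝ E]
  (J : E →ₗ[ℝ] StrongDual ℝ (StrongDual ℝ X)) {ι : Type*} [Fintype ι]

/-- Testing against the rank-one maps `v ↦ ξ v • x` shows that the functionals
`∑ j, ξ (u j) • p j` vanish; expanding each `u j` in a basis of `E` then gives the claim. -/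
lemma sum_bidual_apply_eq_zero (u : ι → E) (p : ι → StrongDual ℝ X)
    (hp : ∀ T : E →ₗ[ℝ] X, ∑ j, p j (T (u j)) = 0) : ∑ j, J (u j) (p j) = 0 := by
  set b := Module.finBasis ℝ E
  have hcoeff : ∀ i, ∑ j, b.coord i (u j) • p j = 0 := fun i => by
    ext x
    simpa [mul_comm] using hp ((b.coord i).smulRight x)
  have hJu : ∀ j, J (u j) = ∑ i, b.coord i (u j) • J (b i) := fun j => by
    conv_lhs => rw [← b.sum_repr (u j)]
    simp only [map_sum, map_smul, Module.Basis.coord_apply]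
  simp only [hJu, FunLike.coe_sum, FunLike.coe_smul, Finset.sum_apply,
    Pi.smul_apply, smul_eq_mul]
  rw [Finset.sum_comm]
  refine Finset.sum_eq_zero fun i _ => ?_
  simpa [map_sum, map_smul] using congrArg (J (b i)) (hcoeff i)

/-- The finite-dimensional core of Goldstine's theorem. On the subspace `{(T (u k))ₖ}` of the
`ℓ∞`-sum `ι → X` the functional `z ↦ f (h k (z k))ₖ` has norm at most `s`; a Hahn–Banach extension
is `z ↦ ∑ k, g k (z k)` with `∑ ‖g k‖ ≤ s`, and `sum_bidual_apply_eq_zero` transfers this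
representation from `X` to `X**`. -/
lemma apply_bidual_pairings_le (u : ι → E) (hu : ∀ k, ‖J (u k)‖ ≤ 1)
    (h : ι → StrongDual ℝ X) (f : StrongDual ℝ (ι → ℝ)) {s : ℝ}
    (hs : ∀ T : E →ₗ[ℝ] X, (∀ k, ‖T (u k)‖ ≤ 1) → f (fun k => h k (T (u k))) ≤ s) :
    f (fun k => J (u k) (h k)) ≤ s := by
  classical
  set a : ι → ℝ := fun j => f fun i => if j = i then 1 else 0
  have hf : ∀ z, f z = ∑ j, z j * a j := f.toLinearMap.pi_apply_eq_sum_univ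
  let Ψ : (E →ₗ[ℝ] X) →ₗ[ℝ] (ι → X) := LinearMap.pi fun k => LinearMap.applyₗ (u k)
  let Q : (ι → X) →L[ℝ] (ι → ℝ) :=
    ContinuousLinearMap.pi fun k => (h k).comp (ContinuousLinearMap.proj k)
  let φ : StrongDual ℝ (LinearMap.range Ψ) := (f ∘L Q) ∘L (LinearMap.range Ψ).subtypeL
  have hφ : ‖φ‖ ≤ s := φ.opNorm_le_of_apply_le fun ⟨_, T, rfl⟩ hz =>
    hs T fun k => (norm_le_pi_norm (Ψ T) k).trans hz
  obtain ⟨g, hg, hφg⟩ := exists_sum_norm_le_of_subspace_pi _ φ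
  have hdual := sum_bidual_apply_eq_zero J u (fun j => a j • h j - g j) fun T => by
    have : f (fun k => h k (T (u k))) = ∑ k, g k (T (u k)) := hφg ⟨Ψ T, T, rfl⟩
    simp [Finset.sum_sub_distrib, ← this, hf, mul_comm]
  calc f (fun k => J (u k) (h k)) = ∑ j, J (u j) (g j) := by
        simp only [map_sub, map_smul, Finset.sum_sub_distrib, sub_eq_zero] at hdual
        simpa [hf, mul_comm] using hdual
    _ ≤ ∑ j, ‖g j‖ := Finset.sum_le_sum fun j _ =>
        (le_abs_self _).trans <| ((J (u j)).le_opNorm _).trans <|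
          mul_le_of_le_one_left (norm_nonneg _) (hu j)
    _ ≤ s := hg.trans hφ

lemma exists_linearMap_approx_bidual (u : ι → E) (hu : ∀ k, ‖J (u k)‖ ≤ 1)
    (h : ι → StrongDual ℝ X) {η : ℝ} (hη : 0 < η) :
    ∃ T : E →ₗ[ℝ] X, ∀ k, ‖T (u k)‖ ≤ 1 ∧ |h k (T (u k)) - J (u k) (h k)| < η := by
  set B := {T : E →ₗ[ℝ] X | ∀ k, ‖T (u k)‖ ≤ 1}
  let A : (E →ₗ[ℝ] X) →ₗ[ℝ] (ι → ℝ) :=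
    LinearMap.pi fun k => (h k).toLinearMap ∘ₗ LinearMap.applyₗ (u k)
  have hB : Convex ℝ B := fun T hT S hS a b ha hb hab k => by
    calc ‖(a • T + b • S) (u k)‖ ≤ a * ‖T (u k)‖ + b * ‖S (u k)‖ := by
          simpa [norm_smul, abs_of_nonneg ha, abs_of_nonneg hb] using
            norm_add_le (a • T (u k)) (b • S (u k))
      _ ≤ 1 := by nlinarith [hT k, hS k]
  have hc : (fun k => J (u k) (h k)) ∈ closure (A '' B) := by
    by_contra hc
    obtain ⟨f, s, hfB, hfc⟩ :=
      geometric_hahn_banach_closed_point (hB.linear_image A).closure isClosed_closure hc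
    exact hfc.not_ge <| apply_bidual_pairings_le J u hu h f fun T hT =>
      (hfB _ (subset_closure ⟨T, hT, rfl⟩)).le
  obtain ⟨_, ⟨T, hT, rfl⟩, hdist⟩ := Metric.mem_closure_iff.1 hc η hη
  refine ⟨T, fun k => ⟨hT k, ?_⟩⟩
  simpa [A, Real.dist_eq, abs_sub_comm] using (dist_pi_lt_iff hη).1 hdist k

end LocalReflexivity

/-- The weak form of the principle of local reflexivity. -/
theorem finitelyRepresentable_bidual (X : Type*) [NormedAddCommGroup X] [NormedSpace ℝ X] :
    FinitelyRepresentable (StrongDual ℝ (StrongDual ℝ X)) X := by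
  intro ε hε F hF
  obtain ⟨η, hη, hη₂, hηε⟩ := exists_pos_le_half_three_mul_le hε
  obtain ⟨t, ht, hnet⟩ := exists_finset_sphere_net (V := F) hη
  have hnorming : ∀ u : t, ∃ φ : StrongDual ℝ X, ‖φ‖ ≤ 1 ∧
      1 - η / 2 < (u : StrongDual ℝ (StrongDual ℝ X)) φ := fun u =>
    ContinuousLinearMap.exists_norm_le_one_lt_apply _ (by
      rw [show ‖(u : StrongDual ℝ (StrongDual ℝ X))‖ = 1 from ht u u.2]; linarith)
  choose φ hφ hφu using hnorming
  obtain ⟨T, hT⟩ := exists_linearMap_approx_bidual F.subtype (fun u : t => (u : F))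
    (fun u => (ht u u.2).le) φ (half_pos hη)
  suffices h3η : IsAlmostIsometry (V := F) (W := X) (3 * η)
      (LinearMap.toContinuousLinearMap T) from ⟨T, IsAlmostIsometry.mono h3η hηε⟩
  refine IsAlmostIsometry.of_net (t := t) hη.le hη₂ hnet fun u hu => ⟨?_, (hT ⟨u, hu⟩).1⟩
  have hφTu : φ ⟨u, hu⟩ (T u) ≤ ‖T u‖ := (le_abs_self _).trans <|
    ((φ ⟨u, hu⟩).le_opNorm _).trans (mul_le_of_le_one_left (norm_nonneg _) (hφ _))
  have hclose := (abs_lt.1 (hT ⟨u, hu⟩).2).1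
  simp only [Submodule.subtype_apply] at hclose
  simp only [LinearMap.coe_toContinuousLinearMap']
  linarith [hφu ⟨u, hu⟩]

section DenseUnion

variable {Z : Type*} [NormedAddCommGroup Z] [NormedSpace ℝ Z]

lemma LinearIsometry.norm_comp_le_of_range_subset {Y₁ Y₂ : Type*}
    [NormedAddCommGroup Y₁] [NormedSpace ℝ Y₁] [NormedAddCommGroup Y₂] [NormedSpace ℝ Y₂]
    (J₁ : Y₁ →ₗᵢ[ℝ] Z) (J₂ : Y₂ →ₗᵢ[ℝ] Z) (h : Set.range J₁ ⊆ Set.range J₂)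
    (f : StrongDual ℝ Z) :
    ‖f ∘L J₁.toContinuousLinearMap‖ ≤ ‖f ∘L J₂.toContinuousLinearMap‖ := by
  refine ContinuousLinearMap.opNorm_le_bound _ (norm_nonneg _) fun y => ?_
  obtain ⟨y', hy'⟩ := h ⟨y, rfl⟩
  calc ‖f (J₁ y)‖ = ‖(f ∘L J₂.toContinuousLinearMap) y'‖ := by simp [hy']
    _ ≤ ‖f ∘L J₂.toContinuousLinearMap‖ * ‖y‖ := by
      rw [← J₁.norm_map, ← hy', J₂.norm_map]
      exact ContinuousLinearMap.le_opNorm _ _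

variable {ι : Type*} {Y : ι → Type*} [∀ i, NormedAddCommGroup (Y i)]
  [∀ i, NormedSpace ℝ (Y i)] (J : ∀ i, Y i →ₗᵢ[ℝ] Z)

lemma exists_lt_norm_comp_of_dense (hdense : Dense (⋃ i, Set.range (J i)))
    (f : StrongDual ℝ Z) {r : ℝ} (hr : r < ‖f‖) :
    ∃ i, r < ‖f ∘L (J i).toContinuousLinearMap‖ := by
  have hU : IsOpen (Metric.ball 0 1 ∩ {x | r < ‖f x‖}) :=
    Metric.isOpen_ball.inter (isOpen_lt continuous_const (continuous_norm.comp f.continuous))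
  obtain ⟨x, hx, hxr⟩ := f.exists_lt_apply_of_lt_opNorm hr
  obtain ⟨_, hmem, hy, hry⟩ :=
    hdense.exists_mem_open hU ⟨x, mem_ball_zero_iff.2 hx, hxr⟩
  obtain ⟨i, y, rfl⟩ := Set.mem_iUnion.1 hmem
  rw [mem_ball_zero_iff, LinearIsometry.norm_map] at hy
  refine ⟨i, hry.trans_le ?_⟩
  exact ((f ∘L (J i).toContinuousLinearMap).le_opNorm y).trans
    (mul_le_of_le_one_right (norm_nonneg _) hy.le)

lemma exists_isAlmostIsometry_precomp [Preorder ι] [IsDirectedOrder ι] [Nonempty ι]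
    (hmono : Monotone fun i => Set.range (J i)) (hdense : Dense (⋃ i, Set.range (J i)))
    (F : Subspace ℝ (StrongDual ℝ Z)) [FiniteDimensional ℝ F] {ε : ℝ} (hε : 0 < ε) :
    ∃ i, IsAlmostIsometry (V := F) (W := StrongDual ℝ (Y i)) ε
      (ContinuousLinearMap.precomp ℝ (J i).toContinuousLinearMap ∘L F.subtypeL) := by
  classical
  obtain ⟨η, hη, hη₂, hηε⟩ := exists_pos_le_half_three_mul_le hε
  obtain ⟨t, ht, hnet⟩ := exists_finset_sphere_net (V := F) hη
  have hnorming : ∀ u : t, ∃ i, 1 - η < ‖(u : StrongDual ℝ Z) ∘L (J i).toContinuousLinearMap‖ :=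
    fun u => exists_lt_norm_comp_of_dense J hdense _ (by
      rw [show ‖(u : StrongDual ℝ Z)‖ = 1 from ht u u.2]; linarith)
  choose i hi using hnorming
  obtain ⟨j, hj⟩ := Finset.exists_le (Finset.univ.image i)
  refine ⟨j, IsAlmostIsometry.mono (IsAlmostIsometry.of_net (V := F)
    (T := ContinuousLinearMap.precomp ℝ (J j).toContinuousLinearMap ∘L F.subtypeL) (t := t)
    hη.le hη₂ hnet fun u hu => ⟨?_, ?_⟩) hηε⟩
  · exact (hi ⟨u, hu⟩).le.trans (LinearIsometry.norm_comp_le_of_range_subset _ _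
      (hmono (hj _ (Finset.mem_image_of_mem _ (Finset.mem_univ _)))) _)
  · calc ‖(u : StrongDual ℝ Z) ∘L (J j).toContinuousLinearMap‖
        ≤ ‖(u : StrongDual ℝ Z)‖ * ‖(J j).toContinuousLinearMap‖ :=
          ContinuousLinearMap.opNorm_comp_le _ _
      _ ≤ 1 * 1 := by
          gcongr
          · exact (ht u hu).le
          · exact (J j).norm_toContinuousLinearMap_le
      _ = 1 := one_mul 1

end DenseUnion

lemma FinitelyRepresentable.strongDual_of_dense_iUnion {Z W ι : Type*}
    [NormedAddCommGroup Z] [NormedSpace ℝ Z] [NormedAddCommGroup W] [NormedSpace ℝ W]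
    [Preorder ι] [IsDirectedOrder ι] [Nonempty ι] {Y : ι → Type*}
    [∀ i, NormedAddCommGroup (Y i)] [∀ i, NormedSpace ℝ (Y i)] (J : ∀ i, Y i →ₗᵢ[ℝ] Z)
    (hmono : Monotone fun i => Set.range (J i)) (hdense : Dense (⋃ i, Set.range (J i)))
    (hY : ∀ i, FinitelyRepresentable (StrongDual ℝ (Y i)) W) :
    FinitelyRepresentable (StrongDual ℝ Z) W :=
  of_forall_exists_isAlmostIsometry hY fun _ hε F _ =>
    (exists_isAlmostIsometry_precomp J hmono hdense F hε).imp fun _ hi => ⟨_, hi⟩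

noncomputable def LinearIsometryEquiv.strongDualCongr {A B : Type*}
    [NormedAddCommGroup A] [NormedSpace ℝ A] [NormedAddCommGroup B] [NormedSpace ℝ B]
    (e : A ≃ₗᵢ[ℝ] B) :
    StrongDual ℝ A ≃ₗᵢ[ℝ] StrongDual ℝ B :=
  { e.toContinuousLinearEquiv.arrowCongr (ContinuousLinearEquiv.refl ℝ ℝ) with
    norm_map' := fun f => f.opNorm_comp_linearIsometryEquiv e.symm }

lemma IsEvenOrdinal.zero : IsEvenOrdinal 0 := ⟨0, 0, Or.inl rfl, by simp⟩

lemma IsEvenOrdinal.of_isSuccLimit {β : Ordinal.{0}} (h : Order.IsSuccLimit β) :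
    IsEvenOrdinal β :=
  ⟨β, 0, Or.inr h, by simp⟩

lemma IsOddOrdinal.cases {γ : Ordinal.{0}} (h : IsOddOrdinal γ) :
    γ = 0 + 1 ∨ (∃ β, Order.IsSuccLimit β ∧ γ = β + 1) ∨
      ∃ γ', IsOddOrdinal γ' ∧ γ = γ' + 1 + 1 := by
  obtain ⟨_, ⟨β, n, hβ, rfl⟩, rfl⟩ := h
  rcases n with _ | m
  · rcases hβ with rfl | hβ
    · simp
    · exact Or.inr (Or.inl ⟨β, hβ, by simp⟩)
  · refine Or.inr (Or.inr ⟨β + 2 * m + 1, ⟨_, ⟨β, m, hβ, rfl⟩, rfl⟩, ?_⟩)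
    rw [Nat.cast_succ, mul_add_one, ← one_add_one_eq_two]
    simp only [add_assoc]

section TransfiniteDuals

variable {R : Type u} [NormedAddCommGroup R] [NormedSpace ℝ R] [CompleteSpace R]
  {space : Ordinal.{0} → Type u}
  [∀ α, NormedAddCommGroup (space α)] [∀ α, NormedSpace ℝ (space α)]
  [∀ α, CompleteSpace (space α)]
  {zeroEquiv : space 0 ≃ₗᵢ[ℝ] R} {succEquiv : ∀ α, space (α + 1) ≃ₗᵢ[ℝ] StrongDual ℝ (space α)}
  {incl : ∀ β γ, β < γ → IsEvenOrdinal β → IsEvenOrdinal γ → (space β →ₗᵢ[ℝ] space γ)}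

namespace IsTransfiniteDualSystem

lemma monotone_range_incl (hsys : IsTransfiniteDualSystem R space zeroEquiv succEquiv incl)
    {β : Ordinal.{0}} (hβ : IsEvenOrdinal β) :
    Monotone fun δ : {δ // δ < β ∧ IsEvenOrdinal δ} => Set.range (incl δ β δ.2.1 δ.2.2 hβ) := by
  intro δ δ' hδδ'
  rcases eq_or_lt_of_le hδδ' with rfl | hlt
  · exact le_rfl
  · rintro _ ⟨x, rfl⟩
    exact ⟨_, hsys.1 _ _ _ hlt δ'.2.1 δ.2.2 δ'.2.2 hβ x⟩

lemma dense_iUnion_range_incl (hsys : IsTransfiniteDualSystem R space zeroEquiv succEquiv incl)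
    {β : Ordinal.{0}} (hβ : Order.IsSuccLimit β) :
    Dense (⋃ δ : {δ // δ < β ∧ IsEvenOrdinal δ},
      Set.range (incl δ β δ.2.1 δ.2.2 (.of_isSuccLimit hβ))) := by
  simpa only [Set.iUnion_subtype, Set.iUnion_and] using hsys.2.2 β hβ (.of_isSuccLimit hβ)

end IsTransfiniteDualSystem

end TransfiniteDuals

theorem statement3 {R : Type u} [NormedAddCommGroup R] [NormedSpace ℝ R] [CompleteSpace R]
    (space : Ordinal.{0} → Type u)
    [∀ α, NormedAddCommGroup (space α)] [∀ α, NormedSpace ℝ (space α)]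
    [∀ α, CompleteSpace (space α)]
    (zeroEquiv : space 0 ≃ₗᵢ[ℝ] R)
    (succEquiv : ∀ α, space (α + 1) ≃ₗᵢ[ℝ] StrongDual ℝ (space α))
    (incl : ∀ β γ, β < γ → IsEvenOrdinal β → IsEvenOrdinal γ → (space β →ₗᵢ[ℝ] space γ))
    (hsys : IsTransfiniteDualSystem R space zeroEquiv succEquiv incl)
    (γ : Ordinal.{0}) (hγ : IsOddOrdinal γ) :
    FinitelyRepresentable (space γ) (StrongDual ℝ R) := by
  induction γ using WellFoundedLT.induction with
  | _ γ ih =>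
  rcases hγ.cases with rfl | ⟨β, hβ, rfl⟩ | ⟨γ', hγ', rfl⟩
  · exact .of_linearIsometry ((succEquiv 0).trans zeroEquiv.strongDualCongr).toLinearIsometry
  · have : Nonempty {δ // δ < β ∧ IsEvenOrdinal δ} := ⟨⟨0, hβ.bot_lt, .zero⟩⟩
    refine .congr_left (succEquiv β) <| .strongDual_of_dense_iUnion _
      (hsys.monotone_range_incl _) (hsys.dense_iUnion_range_incl hβ) fun δ => ?_
    exact .congr_left (succEquiv δ).symm <|
      ih _ (Order.lt_add_one_iff.2 (Order.add_one_le_of_lt δ.2.1)) ⟨δ, δ.2.2, rfl⟩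
  · exact .congr_left ((succEquiv (γ' + 1)).trans (succEquiv γ').strongDualCongr) <|
      (finitelyRepresentable_bidual _).trans (ih γ' (Order.lt_add_one_iff.2 le_self_add) hγ')
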